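/- arXiv:2202.00835 — 2 statements merged into one kernel-verified Lean document; each statement's English description precedes it below -/
import Mathlib

section
/- Suppose a composition α covers α' in position (i,j). Then c_{i,k}(α) = c_{i,k}(α') for every k in [i+1, j], c_{i,j+1}(α) = 1 + c_{i,j}(α), c_{i,j+1}(α') = c_{i,j}(α'), and c_{i,k}(α) > c_{i,k}(α') for every k > j. -/
/-- The matrix `c_{i,j}(α)` defined recursively in `j`. -/
def cmat (α : ℕ → ℕ) (i : ℕ) : ℕ → ℕ
  | 0 => 0
  | j + 1 =>
    if j + 1 ≤ i + 1 then 0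
    else cmat α i j + if α j < α i - cmat α i j then 1 else 0

/-- `α` covers `α'` in position `(i,j)`: conditions (a1)–(a4). -/
def CoversAt (α α' : ℕ → ℕ) (i j : ℕ) : Prop :=
  1 ≤ i ∧ i < j ∧
  α' i + 1 ≤ α i ∧
  α' j + α' i + 1 = α j + α i ∧
  (∀ k, k ≠ i → k ≠ j → α' k = α k) ∧
  cmat α i j = cmat α' i j ∧
  cmat α i j + α j = α' i

/-!
Write `g(k) = α_i - c_{i,k}(α)` for the remaining gap: `c_{i,·}` increases at `k` exactly when
`α_k < g(k)`, and then `g` drops by one. Both the increment and the updated gap are monotone in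
`g(k)`, so on a stretch where two compositions agree, a smaller starting gap stays smaller and
produces a smaller increase of `c_{i,·}`. Comparing `α` and `α'` from `i + 1` to `k` and from `k`
to `j` squeezes `c_{i,k}(α) = c_{i,k}(α')` out of the equality at `j`. Conditions (a2) and (a4) put `α_j`
just below the gap of `α` and `α'_j` at or above that of `α'`, so after position `j` the gap of `α'`
is no larger and `c_{i,·}(α)` is one ahead, which it stays.
-/

lemma cmat_eq_zero_of_le (α : ℕ → ℕ) {i k : ℕ} (hk : k ≤ i + 1) : cmat α i k = 0 := by
  cases k with
  | zero => rfl
  | succ k => simp [cmat, hk]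

lemma cmat_succ_of_lt (α : ℕ → ℕ) {i k : ℕ} (hk : i < k) :
    cmat α i (k + 1) = cmat α i k + if α k < α i - cmat α i k then 1 else 0 := by
  have : ¬ k + 1 ≤ i + 1 := by omega
  simp [cmat, this]

section Comparison

variable {α β : ℕ → ℕ} {i k l : ℕ}

lemma cmat_step_le_of_gap_le (hk : i < k) (hβα : β k = α k)
    (hgap : β i - cmat β i k ≤ α i - cmat α i k) :
    β i - cmat β i (k + 1) ≤ α i - cmat α i (k + 1) ∧
      cmat β i (k + 1) + cmat α i k ≤ cmat α i (k + 1) + cmat β i k := by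
  rw [cmat_succ_of_lt α hk, cmat_succ_of_lt β hk, hβα]
  split_ifs <;> omega

lemma cmat_increment_le_of_gap_le (hk : i < k) (hkl : k ≤ l)
    (hagree : ∀ m, k ≤ m → m < l → β m = α m)
    (hgap : β i - cmat β i k ≤ α i - cmat α i k) :
    β i - cmat β i l ≤ α i - cmat α i l ∧
      cmat β i l + cmat α i k ≤ cmat α i l + cmat β i k := by
  induction l, hkl using Nat.le_induction with
  | base => exact ⟨hgap, le_of_eq (Nat.add_comm _ _)⟩
  | succ l hkl ih =>
    obtain ⟨ihgap, ihinc⟩ := ih fun m hkm hml => hagree m hkm (by omega)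
    obtain ⟨stepgap, stepinc⟩ :=
      cmat_step_le_of_gap_le (by omega) (hagree l hkl (by omega)) ihgap
    exact ⟨stepgap, by omega⟩

end Comparison

/-- properties (i)–(iii) of a covering pair. -/
theorem cmat_of_coversAt (α α' : ℕ → ℕ) (i j : ℕ) (h : CoversAt α α' i j) :
    (∀ k, i + 1 ≤ k → k ≤ j → cmat α i k = cmat α' i k) ∧
    cmat α i (j + 1) = 1 + cmat α i j ∧
    cmat α' i (j + 1) = cmat α' i j ∧
    (∀ k, j < k → cmat α' i k < cmat α i k) := by
  obtain ⟨-, hij, hlt, hsum, hagree, hcj, hcαj⟩ := h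
  have hstart : α' i - cmat α' i (i + 1) ≤ α i - cmat α i (i + 1) := by
    rw [cmat_eq_zero_of_le α le_rfl, cmat_eq_zero_of_le α' le_rfl]; omega
  have hbefore : ∀ k, i + 1 ≤ k → k ≤ j → cmat α i k = cmat α' i k := by
    intro k hik hkj
    obtain ⟨hgap, hinc⟩ := cmat_increment_le_of_gap_le i.lt_succ_self hik
      (fun m hm hmk => hagree m (by omega) (by omega)) hstart
    obtain ⟨-, hinc'⟩ := cmat_increment_le_of_gap_le hik hkj
      (fun m hm hmj => hagree m (by omega) (by omega)) hgap
    rw [cmat_eq_zero_of_le α le_rfl, cmat_eq_zero_of_le α' le_rfl] at hinc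
    omega
  have hαj : cmat α i (j + 1) = 1 + cmat α i j := by
    rw [cmat_succ_of_lt α hij, if_pos (by omega), Nat.add_comm]
  have hα'j : cmat α' i (j + 1) = cmat α' i j := by
    rw [cmat_succ_of_lt α' hij, if_neg (by omega), Nat.add_zero]
  refine ⟨hbefore, hαj, hα'j, fun k hjk => ?_⟩
  have hgap : α' i - cmat α' i (j + 1) ≤ α i - cmat α i (j + 1) := by
    rw [hαj, hα'j, ← hcj]; omega
  obtain ⟨-, hinc⟩ := cmat_increment_le_of_gap_le (k := j + 1) (by omega) hjk
    (fun m hm _ => hagree m (by omega) (by omega)) hgap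
  omega
end

section
/- Suppose a composition α covers α' in position (i,j). Then for every k in [i+1, j−1], either α_k + c_{i,k}(α) ≥ α_i or α_k + c_{i,k}(α) < α'_i. -/
section

variable {α α' : ℕ → ℕ} {i j k : ℕ}

@[simp]
lemma cmat_self_succ (α : ℕ → ℕ) (i : ℕ) : cmat α i (i + 1) = 0 := by
  simp [cmat]

lemma cmat_succ (hk : i < k) :
    cmat α i (k + 1) = cmat α i k + if α k + cmat α i k < α i then 1 else 0 := by
  rw [cmat, if_neg (by omega)]
  congr 1
  exact if_congr (by omega) rfl rfl

lemma cmat_succ_invariant (hk : i < k) (hαk : α' k = α k)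
    (hle : cmat α' i k ≤ cmat α i k) (hgap : cmat α i k + α' i ≤ cmat α' i k + α i) :
    cmat α' i (k + 1) ≤ cmat α i (k + 1) ∧
      cmat α i (k + 1) + α' i ≤ cmat α' i (k + 1) + α i ∧
      cmat α i k + cmat α' i (k + 1) ≤ cmat α i (k + 1) + cmat α' i k := by
  rw [cmat_succ hk, cmat_succ hk, hαk]
  split_ifs <;> omega

lemma cmat_invariant_of_agree (hαi : α' i ≤ α i)
    (hagree : ∀ m, i < m → m < j → α' m = α m) (hik : i < k) (hkj : k ≤ j) :
    cmat α' i k ≤ cmat α i k ∧ cmat α i k + α' i ≤ cmat α' i k + α i := by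
  induction k, hik using Nat.le_induction with
  | base => simpa using hαi
  | succ k hik ih =>
    obtain ⟨hle, hgap⟩ := ih (by omega)
    obtain ⟨hle', hgap', -⟩ := cmat_succ_invariant hik (hagree k hik (by omega)) hle hgap
    exact ⟨hle', hgap'⟩

lemma cmat_sub_cmat_monotone {l : ℕ} (hαi : α' i ≤ α i)
    (hagree : ∀ m, i < m → m < j → α' m = α m) (hik : i < k) (hkl : k ≤ l)
    (hlj : l ≤ j) :
    cmat α i k + cmat α' i l ≤ cmat α i l + cmat α' i k := by
  induction l, hkl using Nat.le_induction with
  | base => rfl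
  | succ l hkl ih =>
    obtain ⟨hle, hgap⟩ := cmat_invariant_of_agree hαi hagree (k := l) (by omega) (by omega)
    have hstep := (cmat_succ_invariant (by omega) (hagree l (by omega) (by omega)) hle hgap).2.2
    have := ih (by omega)
    omega

lemma cmat_eq_cmat_of_agree (hαi : α' i ≤ α i)
    (hagree : ∀ m, i < m → m < j → α' m = α m) (hj : cmat α i j = cmat α' i j)
    (hik : i < k) (hkj : k ≤ j) :
    cmat α i k = cmat α' i k := by
  have hle := (cmat_invariant_of_agree hαi hagree hik hkj).1
  have hmono := cmat_sub_cmat_monotone hαi hagree hik hkj le_rfl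
  omega

end

/-- property (iv) of a covering pair: for each `k ∈ [i+1, j-1]`,
either `α_k + c_{i,k}(α) ≥ α_i` or `α_k + c_{i,k}(α) < α'_i`. -/
theorem cmat_dichotomy_of_coversAt (α α' : ℕ → ℕ) (i j : ℕ)
    (h : CoversAt α α' i j) :
    ∀ k, i + 1 ≤ k → k < j →
      α i ≤ α k + cmat α i k ∨ α k + cmat α i k < α' i := by
  obtain ⟨-, -, hαi, -, hoff, hj, -⟩ := h
  have hagree : ∀ m, i < m → m < j → α' m = α m := fun m him hmj =>
    hoff m (by omega) (by omega)
  intro k hik hkj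
  have hk := cmat_eq_cmat_of_agree (by omega) hagree hj hik hkj.le
  have hk' := cmat_eq_cmat_of_agree (by omega) hagree hj (k := k + 1) (by omega) hkj
  rw [cmat_succ hik, cmat_succ hik, hagree k hik hkj, ← hk] at hk'
  split_ifs at hk' <;> omega
end
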